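/- Let ⟨U|V⟩ be a nonsingular conditional distribution (i.e., for P_V-almost every v, the law of U given V=v is a mixture of absolutely continuous and discrete parts) with E[U²] < ∞. Then the conditional Rényi information dimension satisfies d(U|V) = E_V[d(U|V=v)], i.e., lim_{n→∞} H(⌊nU⌋/n | V)/log₂ n = E_V[lim_{n→∞} H(⌊nU⌋/n | V=v)/log₂ n]. -/

import Mathlib

open MeasureTheory ProbabilityTheory Filter

/-- A measure on `ℝ` is nonsingular if its singular part w.r.t. Lebesgue measure is carried
by a countable set (no singular continuous component). -/
def Nonsingular (μ : Measure ℝ) : Prop :=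
  ∃ s : Set ℝ, s.Countable ∧ μ.singularPart volume sᶜ = 0

/-- Shannon entropy (bits) of the quantization of a distribution `μ` on `ℝ` with resolution
`1/n`, i.e. of `⌊nU⌋/n` when `U ∼ μ`. -/
noncomputable def quantEnt (n : ℕ) (μ : Measure ℝ) : ℝ :=
  ∑' k : ℤ, -((μ (Set.Ico ((k : ℝ) / n) ((k + 1 : ℝ) / n))).toReal *
      Real.logb 2 (μ (Set.Ico ((k : ℝ) / n) ((k + 1 : ℝ) / n))).toReal)

/-!
Dominated convergence in `v`. Gibbs' inequality against summable weights on the cells bounds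
`H(⌊nU⌋/n | V = v)` by `log₂ n + (E[|U| | V = v] + 5) / log 2`, so
`H(⌊nU⌋/n | V = v) / log₂ n` is dominated by an integrable function of `v` once `E[U²] < ∞`.
-/

open Real
open scoped ENNReal

def quantCell (n : ℕ) (k : ℤ) : Set ℝ := Set.Ico ((k : ℝ) / n) ((k + 1 : ℝ) / n)

lemma mem_quantCell_iff {n : ℕ} (hn : 0 < n) {k : ℤ} {u : ℝ} :
    u ∈ quantCell n k ↔ ⌊(n : ℝ) * u⌋ = k := by
  have hn' : (0 : ℝ) < n := by exact_mod_cast hn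
  rw [quantCell, Set.mem_Ico, div_le_iff₀ hn', lt_div_iff₀ hn', Int.floor_eq_iff, mul_comm u]

lemma measurableSet_quantCell (n : ℕ) (k : ℤ) : MeasurableSet (quantCell n k) :=
  measurableSet_Ico

lemma pairwise_disjoint_quantCell {n : ℕ} (hn : 0 < n) :
    Pairwise (Function.onFun Disjoint (quantCell n)) := fun _ _ hij =>
  Set.disjoint_left.2 fun _ hi hj =>
    hij (((mem_quantCell_iff hn).1 hi).symm.trans ((mem_quantCell_iff hn).1 hj))

lemma iUnion_quantCell {n : ℕ} (hn : 0 < n) : ⋃ k, quantCell n k = Set.univ :=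
  Set.eq_univ_of_forall fun _ => Set.mem_iUnion.2 ⟨_, (mem_quantCell_iff hn).2 rfl⟩

lemma natAbs_div_le_abs_add_one_of_mem_quantCell {n : ℕ} (hn : 0 < n) {k : ℤ} {u : ℝ}
    (hu : u ∈ quantCell n k) : (k.natAbs : ℝ) / n ≤ |u| + 1 := by
  have hn' : (1 : ℝ) ≤ n := by exact_mod_cast hn
  rw [Nat.cast_natAbs, Int.cast_abs, ← (mem_quantCell_iff hn).1 hu,
    div_le_iff₀ (by positivity)]
  have h₁ := Int.floor_le ((n : ℝ) * u)
  have h₂ := Int.sub_one_lt_floor ((n : ℝ) * u)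
  have h₃ : |(n : ℝ) * u| = n * |u| := by rw [abs_mul, Nat.abs_cast]
  rw [abs_le] at *
  constructor <;>
    nlinarith [le_abs_self ((n : ℝ) * u), neg_abs_le ((n : ℝ) * u), abs_nonneg u]

lemma negMulLog_le_mul_neg_log_add {p q : ℝ} (hp : 0 ≤ p) (hq : 0 < q) :
    negMulLog p ≤ p * -log q + q := by
  have h := negMulLog_le_one_sub_self (div_nonneg hp hq.le)
  calc negMulLog p = negMulLog (q * (p / q)) := by rw [mul_div_cancel₀ _ hq.ne']
    _ = p / q * negMulLog q + q * negMulLog (p / q) := negMulLog_mul _ _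
    _ ≤ p / q * negMulLog q + q * (1 - p / q) := by gcongr
    _ = p * -log q + q - p := by rw [negMulLog]; field_simp; ring
    _ ≤ p * -log q + q := by linarith

lemma tsum_negMulLog_le {ι : Type*} {p q : ι → ℝ} (hp : ∀ i, 0 ≤ p i) (hq : ∀ i, 0 < q i) :
    ∑' i, ENNReal.ofReal (negMulLog (p i)) ≤
      ∑' i, ENNReal.ofReal (p i * -log (q i)) + ∑' i, ENNReal.ofReal (q i) := by
  rw [← ENNReal.tsum_add]
  refine ENNReal.tsum_le_tsum fun i => ?_
  exact (ENNReal.ofReal_le_ofReal (negMulLog_le_mul_neg_log_add (hp i) (hq i))).trans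
    ENNReal.ofReal_add_le

lemma tsum_int_natAbs_le (g : ℕ → ℝ≥0∞) : ∑' k : ℤ, g k.natAbs ≤ 2 * ∑' m, g m := by
  rw [tsum_of_nat_of_neg_add_one ENNReal.summable ENNReal.summable, two_mul]
  refine add_le_add (by simp) ?_
  calc ∑' m : ℕ, g (-((m : ℤ) + 1)).natAbs = ∑' m : ℕ, g m.succ := by congr! 2
    _ ≤ ∑' m, g m := ENNReal.tsum_comp_le_tsum_of_injective Nat.succ_injective g

lemma tsum_exp_neg_natAbs_div_le {n : ℕ} (hn : 0 < n) :
    ∑' k : ℤ, ENNReal.ofReal (exp (-(k.natAbs / n)) / n) ≤ 4 := by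
  have hn' : (0 : ℝ) < n := by exact_mod_cast hn
  set ρ := exp (-(1 / n : ℝ))
  have hρ0 : 0 ≤ ρ := (exp_pos _).le
  have hρ1 : ρ < 1 := exp_lt_one_iff.2 (by simpa using hn')
  have hρ : ρ ≤ n / (n + 1) := by
    calc ρ = (exp (1 / n))⁻¹ := exp_neg _
      _ ≤ (1 / (n : ℝ) + 1)⁻¹ := by gcongr; exact add_one_le_exp _
      _ = n / (n + 1) := by field_simp; ring
  have hgeo : (1 - ρ)⁻¹ / n ≤ 2 := by
    have hgap : 1 / (n + 1 : ℝ) ≤ 1 - ρ := by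
      calc 1 / (n + 1 : ℝ) = 1 - n / (n + 1) := by field_simp; ring
        _ ≤ 1 - ρ := by linarith
    rw [div_le_iff₀ hn']
    calc (1 - ρ)⁻¹ ≤ (1 / (n + 1 : ℝ))⁻¹ := by gcongr
      _ ≤ 2 * n := by rw [one_div, inv_inv]; linarith [show (1 : ℝ) ≤ n by exact_mod_cast hn]
  have hterm : ∀ m : ℕ, exp (-(m / n : ℝ)) / n = ρ ^ m / n := fun m => by
    rw [← exp_nat_mul]; ring_nf
  calc ∑' k : ℤ, ENNReal.ofReal (exp (-(k.natAbs / n)) / n)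
      ≤ 2 * ∑' m : ℕ, ENNReal.ofReal (exp (-(m / n)) / n) :=
        tsum_int_natAbs_le fun m => ENNReal.ofReal (exp (-(m / n)) / n)
    _ = 2 * ENNReal.ofReal ((1 - ρ)⁻¹ / n) := by
        simp_rw [hterm]
        rw [← ENNReal.ofReal_tsum_of_nonneg (fun m => by positivity)
          ((summable_geometric_of_lt_one hρ0 hρ1).div_const _), tsum_div_const,
          tsum_geometric_of_lt_one hρ0 hρ1]
    _ ≤ 2 * ENNReal.ofReal 2 := by gcongr
    _ = 4 := by norm_num

/-- Gibbs' inequality against the weights `w k = exp (-|k|/n) / n`, whose total mass is at most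
`4` and for which `-log (w k) = log n + |k|/n ≤ log n + |u| + 1` on the `k`-th cell. -/
lemma tsum_negMulLog_measure_quantCell_le (μ : Measure ℝ) [IsProbabilityMeasure μ] {n : ℕ}
    (hn : 0 < n) :
    ∑' k : ℤ, ENNReal.ofReal (negMulLog (μ (quantCell n k)).toReal) ≤
      ENNReal.ofReal (log n) + ∫⁻ u, ENNReal.ofReal |u| ∂μ + 5 := by
  have hn' : (0 : ℝ) < n := by exact_mod_cast hn
  set w : ℤ → ℝ := fun k => exp (-(k.natAbs / n)) / n
  set F : ℝ → ℝ≥0∞ := fun u => ENNReal.ofReal (log n) + ENNReal.ofReal |u| + 1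
  have hF : Measurable F := by fun_prop
  have hcell (k : ℤ) : ENNReal.ofReal ((μ (quantCell n k)).toReal * -log (w k)) ≤
      ∫⁻ u in quantCell n k, F u ∂μ := by
    have hlog : -log (w k) = log n + k.natAbs / n := by
      simp only [w, log_div (exp_pos _).ne' hn'.ne', log_exp]; ring
    rw [hlog, ENNReal.ofReal_mul ENNReal.toReal_nonneg,
      ENNReal.ofReal_toReal (measure_ne_top _ _), mul_comm, ← setLIntegral_const]
    refine setLIntegral_mono hF fun u hu => ?_
    calc ENNReal.ofReal (log n + k.natAbs / n) ≤ ENNReal.ofReal (log n + (|u| + 1)) :=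
          ENNReal.ofReal_le_ofReal
            (by linarith [natAbs_div_le_abs_add_one_of_mem_quantCell hn hu])
      _ ≤ F u := by
          rw [← add_assoc]
          refine ENNReal.ofReal_add_le.trans (add_le_add ENNReal.ofReal_add_le ?_)
          simp
  calc ∑' k : ℤ, ENNReal.ofReal (negMulLog (μ (quantCell n k)).toReal)
      ≤ ∑' k, ENNReal.ofReal ((μ (quantCell n k)).toReal * -log (w k)) +
          ∑' k, ENNReal.ofReal (w k) :=
        tsum_negMulLog_le (fun _ => ENNReal.toReal_nonneg) (fun _ => by positivity)
    _ ≤ ∑' k, ∫⁻ u in quantCell n k, F u ∂μ + 4 :=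
        add_le_add (ENNReal.tsum_le_tsum hcell) (tsum_exp_neg_natAbs_div_le hn)
    _ = ∫⁻ u, F u ∂μ + 4 := by
        rw [← lintegral_iUnion (measurableSet_quantCell n) (pairwise_disjoint_quantCell hn),
          iUnion_quantCell hn, Measure.restrict_univ]
    _ = ENNReal.ofReal (log n) + ∫⁻ u, ENNReal.ofReal |u| ∂μ + 5 := by
        simp only [F]
        rw [lintegral_add_right _ measurable_const, lintegral_add_left measurable_const,
          lintegral_const, lintegral_const, measure_univ, mul_one, mul_one, add_assoc _ 1]
        norm_num

lemma quantEnt_eq (n : ℕ) (μ : Measure ℝ) [IsProbabilityMeasure μ] :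
    quantEnt n μ =
      (∑' k : ℤ, ENNReal.ofReal (negMulLog (μ (quantCell n k)).toReal)).toReal / log 2 := by
  rw [ENNReal.tsum_toReal_eq fun _ => ENNReal.ofReal_ne_top, quantEnt, ← tsum_div_const]
  congr 1 with k
  rw [ENNReal.toReal_ofReal (negMulLog_nonneg ENNReal.toReal_nonneg measureReal_le_one),
    negMulLog, logb, quantCell]
  ring

lemma quantEnt_nonneg (n : ℕ) (μ : Measure ℝ) [IsProbabilityMeasure μ] : 0 ≤ quantEnt n μ := by
  rw [quantEnt_eq]
  positivity

lemma measurable_quantEnt {α : Type*} [MeasurableSpace α] (n : ℕ) (κ : Kernel α ℝ)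
    [IsMarkovKernel κ] : Measurable fun a => quantEnt n (κ a) := by
  simp_rw [quantEnt_eq]
  refine ((Measurable.tsum fun k => ?_).ennreal_toReal).div_const _
  exact ENNReal.measurable_ofReal.comp (continuous_negMulLog.measurable.comp
    (κ.measurable_coe (measurableSet_quantCell n k)).ennreal_toReal)

lemma quantEnt_le (μ : Measure ℝ) [IsProbabilityMeasure μ]
    (hμ : ∫⁻ u, ENNReal.ofReal |u| ∂μ ≠ ∞) {n : ℕ} (hn : 0 < n) :
    quantEnt n μ ≤ logb 2 n + ((∫⁻ u, ENNReal.ofReal |u| ∂μ).toReal + 5) / log 2 := by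
  rw [quantEnt_eq, logb, ← add_div]
  gcongr
  refine ENNReal.toReal_le_of_le_ofReal (by positivity) ?_
  have hlog : 0 ≤ log n := log_natCast_nonneg n
  rw [ENNReal.ofReal_add hlog (by positivity),
    ENNReal.ofReal_add ENNReal.toReal_nonneg (by norm_num), ENNReal.ofReal_toReal hμ, ← add_assoc]
  simpa using tsum_negMulLog_measure_quantCell_le μ hn

lemma quantEnt_div_logb_le (μ : Measure ℝ) [IsProbabilityMeasure μ]
    (hμ : ∫⁻ u, ENNReal.ofReal |u| ∂μ ≠ ∞) (n : ℕ) :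
    quantEnt n μ / logb 2 n ≤ 1 + ((∫⁻ u, ENNReal.ofReal |u| ∂μ).toReal + 5) / log 2 := by
  set C := ((∫⁻ u, ENNReal.ofReal |u| ∂μ).toReal + 5) / log 2
  have hC : 0 ≤ C := by positivity
  rcases lt_or_ge n 2 with hn | hn
  · have hL : logb 2 n = 0 := by interval_cases n <;> simp
    rw [hL, div_zero]
    linarith
  · have hL : 1 ≤ logb 2 n := by
      rw [le_logb_iff_rpow_le one_lt_two (by positivity)]
      simpa using (show (2 : ℝ) ≤ n by exact_mod_cast hn)
    rw [div_le_iff₀ (by linarith)]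
    nlinarith [quantEnt_le μ hμ (by omega : 0 < n)]

lemma lintegral_ofReal_abs_le_lintegral_sq_add_one (μ : Measure ℝ) [IsProbabilityMeasure μ] :
    ∫⁻ u, ENNReal.ofReal |u| ∂μ ≤ ∫⁻ u, ENNReal.ofReal (u ^ 2) ∂μ + 1 := by
  calc ∫⁻ u, ENNReal.ofReal |u| ∂μ ≤ ∫⁻ u, (ENNReal.ofReal (u ^ 2) + 1) ∂μ := by
        refine lintegral_mono fun u => ?_
        calc ENNReal.ofReal |u| ≤ ENNReal.ofReal (u ^ 2 + 1) :=
              ENNReal.ofReal_le_ofReal (by nlinarith [sq_abs u, sq_nonneg (|u| - 1)])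
          _ ≤ ENNReal.ofReal (u ^ 2) + 1 := ENNReal.ofReal_add_le.trans_eq (by simp)
    _ = ∫⁻ u, ENNReal.ofReal (u ^ 2) ∂μ + 1 := by
        rw [lintegral_add_right _ measurable_const, lintegral_const, measure_univ, mul_one]

theorem cond_rid_eq_average_general (PV : Measure ℝ) [IsProbabilityMeasure PV]
    (κ : Kernel ℝ ℝ) [IsMarkovKernel κ]
    (hmom : ∫⁻ v, (∫⁻ u, ENNReal.ofReal (u ^ 2) ∂(κ v)) ∂PV < ⊤)
    (dv : ℝ → ℝ)
    (hptwise : ∀ᵐ v ∂PV,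
      Tendsto (fun n : ℕ => quantEnt n (κ v) / Real.logb 2 n) atTop (nhds (dv v))) :
    Tendsto (fun n : ℕ => (∫ v, quantEnt n (κ v) ∂PV) / Real.logb 2 n) atTop
      (nhds (∫ v, dv v ∂PV)) := by
  set m : ℝ → ℝ≥0∞ := fun v => ∫⁻ u, ENNReal.ofReal |u| ∂(κ v)
  have hm_meas : Measurable m := Measurable.lintegral_kernel (by fun_prop)
  have hm_fin : ∫⁻ v, m v ∂PV ≠ ∞ := by
    refine ne_top_of_le_ne_top ?_
      (lintegral_mono fun v => lintegral_ofReal_abs_le_lintegral_sq_add_one (κ v))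
    rw [lintegral_add_right _ measurable_const, lintegral_const, measure_univ, mul_one]
    exact ENNReal.add_ne_top.2 ⟨hmom.ne, ENNReal.one_ne_top⟩
  have hbound : Integrable (fun v => 1 + ((m v).toReal + 5) / log 2) PV :=
    (integrable_const 1).add
      (((integrable_toReal_of_lintegral_ne_top hm_meas.aemeasurable hm_fin).add
        (integrable_const 5)).div_const _)
  have hdom (n : ℕ) :
      ∀ᵐ v ∂PV, ‖quantEnt n (κ v) / logb 2 n‖ ≤ 1 + ((m v).toReal + 5) / log 2 := by
    filter_upwards [ae_lt_top hm_meas hm_fin] with v hv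
    have hlogb : 0 ≤ logb 2 (n : ℝ) := div_nonneg (log_natCast_nonneg n) (log_nonneg one_le_two)
    rw [norm_of_nonneg (div_nonneg (quantEnt_nonneg n _) hlogb)]
    exact quantEnt_div_logb_le (κ v) hv.ne n
  simpa only [integral_div] using tendsto_integral_of_dominated_convergence _
    (fun n => ((measurable_quantEnt n κ).div_const _).aestronglyMeasurable) hbound hdom hptwise

/-- Let `⟨U|V⟩` be a nonsingular conditional distribution (given by a Markov kernel `κ` and
the law `PV` of `V`) with `E[U²] < ∞`.  Then the conditional Rényi information dimension
equals the average of the pointwise ones: if `d(U|V=v) = lim_n H(⌊nU⌋/n | V=v)/log₂ n`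
exists `PV`-a.s. (with value `dv v`), then
`d(U|V) = lim_n H(⌊nU⌋/n | V)/log₂ n = E_V[d(U|V=v)]`, where
`H(⌊nU⌋/n | V) = ∫ H(⌊nU⌋/n | V=v) dPV(v)`. -/
theorem cond_rid_eq_average (PV : Measure ℝ) [IsProbabilityMeasure PV]
    (κ : Kernel ℝ ℝ) [IsMarkovKernel κ]
    (hns : ∀ᵐ v ∂PV, Nonsingular (κ v))
    (hmom : ∫⁻ v, (∫⁻ u, ENNReal.ofReal (u ^ 2) ∂(κ v)) ∂PV < ⊤)
    (dv : ℝ → ℝ)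
    (hptwise : ∀ᵐ v ∂PV,
      Tendsto (fun n : ℕ => quantEnt n (κ v) / Real.logb 2 n) atTop (nhds (dv v))) :
    Tendsto (fun n : ℕ => (∫ v, quantEnt n (κ v) ∂PV) / Real.logb 2 n) atTop
      (nhds (∫ v, dv v ∂PV)) :=
  cond_rid_eq_average_general PV κ hmom dv hptwise
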